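/- Let s, t ∈ ℝ⁴ be nonnegative and u ∈ ℂ⁴ with √(s₁t₁) = √(s₄t₄) = |u₂| = |u₃| = 1 and s₂ = s₃ = t₂ = t₃ = 0, u₁ = u₄ = 0. Suppose (s,t,u) = (s',t',u') + (s'',t'',u'') with nonnegative s-, t-components where both summands satisfy √(s'ᵢt'ᵢ) + √(s'ⱼt'ⱼ) ≥ |u'ᵢ| + |u'ⱼ| for (i,j) ∈ {(1,3),(2,4),(1,2),(3,4)} (and likewise for the double-primed triple). Then one summand is a nonnegative multiple of the other. -/

import Mathlib

/-- The inequality `W₁[i,j]` for a witness triple `(s,t,u)`. -/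
def W1 (s t : Fin 4 → ℝ) (u : Fin 4 → ℂ) (i j : Fin 4) : Prop :=
  Real.sqrt (s i * t i) + Real.sqrt (s j * t j) ≥ ‖u i‖ + ‖u j‖

/-!
Indices are shifted by one with respect to the paper: `Fin 4` index `i` is the paper's `i + 1`.

By Cauchy–Schwarz and the triangle inequality,
`√(s'₁t'₁) + √(s''₁t''₁) ≤ √(s₁t₁) = 1 = ‖u₂‖ ≤ ‖u'₂‖ + ‖u''₂‖`, while `W₁[1,2]` for the two
summands (where `s₂ = 0`) bounds the right side by the left. So the chain is tight: equality in
Cauchy–Schwarz makes `(s'₁, t'₁)` the multiple `λ = √(s'₁t'₁)` of `(s₁, t₁)`, and equality in the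
(strictly convex) triangle inequality makes `u'₂ = λ u₂`. Running the same argument with `W₁[1,3]`
and `u₃`, and with `W₁[2,4]` at the index `4`, yields `‖u'₂‖ = √(s'₄t'₄)` as well, so every
component of `(s', t', u')` is `λ` times that of `(s, t, u)`. The same holds for the other summand,
and two nonnegative multiples of one vector lie on a common ray.
-/

open Real

section CauchySchwarz

variable {a b c d : ℝ}

theorem sqrt_mul_add_sqrt_mul_sq (ha : 0 ≤ a) (hb : 0 ≤ b) (hc : 0 ≤ c) (hd : 0 ≤ d) :
    (√(a * c) + √(b * d)) ^ 2 = (a + b) * (c + d) - (√(a * d) - √(b * c)) ^ 2 := by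
  have hcross : √(a * c) * √(b * d) = √(a * d) * √(b * c) := by
    rw [← sqrt_mul (by positivity), ← sqrt_mul (by positivity)]
    ring_nf
  rw [add_sq, sub_sq, sq_sqrt (by positivity), sq_sqrt (by positivity), sq_sqrt (by positivity),
    sq_sqrt (by positivity), mul_assoc 2, hcross]
  ring

theorem sqrt_mul_add_sqrt_mul_le (ha : 0 ≤ a) (hb : 0 ≤ b) (hc : 0 ≤ c) (hd : 0 ≤ d) :
    √(a * c) + √(b * d) ≤ √((a + b) * (c + d)) := by
  rw [le_sqrt (by positivity) (by positivity), sqrt_mul_add_sqrt_mul_sq ha hb hc hd]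
  linarith [sq_nonneg (√(a * d) - √(b * c))]

theorem mul_eq_mul_of_sqrt_mul_le_sqrt_mul_add_sqrt_mul (ha : 0 ≤ a) (hb : 0 ≤ b) (hc : 0 ≤ c)
    (hd : 0 ≤ d) (h : √((a + b) * (c + d)) ≤ √(a * c) + √(b * d)) : a * d = b * c := by
  rw [sqrt_le_left (by positivity), sqrt_mul_add_sqrt_mul_sq ha hb hc hd] at h
  have : √(a * d) = √(b * c) := by nlinarith [sq_nonneg (√(a * d) - √(b * c))]
  rwa [sqrt_inj (by positivity) (by positivity)] at this

theorem mul_sqrt_mul_add_eq_of_mul_eq_mul (ha : 0 ≤ a) (hb : 0 ≤ b) (hc : 0 ≤ c) (hd : 0 ≤ d)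
    (h : a * d = b * c) : a * √((a + b) * (c + d)) = √(a * c) * (a + b) := by
  rw [← sq_eq_sq₀ (by positivity) (by positivity), mul_pow, mul_pow,
    sq_sqrt (by positivity), sq_sqrt (by positivity)]
  linear_combination a * (a + b) * h

end CauchySchwarz

theorem SameRay.exists_nonneg_smul_eq_or {R M : Type*} [Field R] [LinearOrder R]
    [IsStrictOrderedRing R] [AddCommGroup M] [Module R M] {x y : M}
    (h : SameRay R x y) : ∃ c : R, 0 ≤ c ∧ (x = c • y ∨ y = c • x) := by
  by_cases hx : x = 0
  · exact ⟨0, le_rfl, Or.inl (by simp [hx])⟩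
  · obtain ⟨r, hr, rfl⟩ := h.exists_nonneg_left hx
    exact ⟨r, hr, Or.inr rfl⟩

theorem eq_norm_smul_add_of_norm_add_le {E : Type*} [NormedAddCommGroup E] [NormedSpace ℝ E]
    [StrictConvexSpace ℝ E] {x y : E} (h : ‖x‖ + ‖y‖ ≤ ‖x + y‖) :
    ‖x + y‖ • x = ‖x‖ • (x + y) := by
  have hxy : SameRay ℝ x y := sameRay_iff_norm_add.2 (le_antisymm (norm_add_le x y) h)
  exact ((SameRay.refl x).add_right hxy).norm_smul_eq.symm

theorem witness_cauchySchwarz_rigidity {E : Type*} [NormedAddCommGroup E] [NormedSpace ℝ E]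
    [StrictConvexSpace ℝ E] {a b c d : ℝ} {e f x y : E}
    (ha : 0 ≤ a) (hb : 0 ≤ b) (hc : 0 ≤ c) (hd : 0 ≤ d)
    (habcd : √((a + b) * (c + d)) = 1) (hxy : ‖x + y‖ = 1)
    (hx : ‖e‖ + ‖x‖ ≤ √(a * c)) (hy : ‖f‖ + ‖y‖ ≤ √(b * d)) :
    e = 0 ∧ ‖x‖ = √(a * c) ∧ a = √(a * c) * (a + b) ∧ c = √(a * c) * (c + d) ∧
      x = √(a * c) • (x + y) := by
  -- `1 = ‖x + y‖ ≤ ‖x‖ + ‖y‖ ≤ √(a c) + √(b d) ≤ √((a + b) (c + d)) = 1` is tight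
  have hcs := sqrt_mul_add_sqrt_mul_le ha hb hc hd
  have htri := norm_add_le x y
  have he := norm_nonneg e
  have hf := norm_nonneg f
  have hx_eq : ‖x‖ = √(a * c) := by linarith
  have hcross := mul_eq_mul_of_sqrt_mul_le_sqrt_mul_add_sqrt_mul ha hb hc hd (by linarith)
  have hac := mul_sqrt_mul_add_eq_of_mul_eq_mul ha hb hc hd hcross
  have hca := mul_sqrt_mul_add_eq_of_mul_eq_mul hc hd ha hb (by linarith)
  have hsmul := eq_norm_smul_add_of_norm_add_le (x := x) (y := y) (by linarith)
  rw [habcd, mul_one] at hac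
  rw [mul_comm (c + d), habcd, mul_one, mul_comm c] at hca
  rw [hxy, one_smul, hx_eq] at hsmul
  exact ⟨norm_eq_zero.1 (by linarith), hx_eq, hac, hca, hsmul⟩

theorem W1.symm {s t : Fin 4 → ℝ} {u : Fin 4 → ℂ} {i j : Fin 4} (h : W1 s t u i j) :
    W1 s t u j i := by
  unfold W1 at *
  linarith

theorem W1.norm_add_norm_le {s t : Fin 4 → ℝ} {u : Fin 4 → ℂ} {i j : Fin 4} (h : W1 s t u i j)
    (hj : s j = 0) : ‖u i‖ + ‖u j‖ ≤ √(s i * t i) := by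
  simpa [W1, hj] using h

/-- Membership in `ℬ° ∩ 𝒞° ∩ 𝖷`. -/
def InBCDual (s t : Fin 4 → ℝ) (u : Fin 4 → ℂ) : Prop :=
  W1 s t u 0 2 ∧ W1 s t u 1 3 ∧ W1 s t u 0 1 ∧ W1 s t u 2 3

theorem eq_sqrt_smul_of_W2e14_eq_add {s t s' t' s'' t'' : Fin 4 → ℝ}
    {u u' u'' : Fin 4 → ℂ}
    (h1 : √(s 0 * t 0) = 1) (h4 : √(s 3 * t 3) = 1) (hu2 : ‖u 1‖ = 1) (hu3 : ‖u 2‖ = 1)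
    (hs2 : s 1 = 0) (hs3 : s 2 = 0) (ht2 : t 1 = 0) (ht3 : t 2 = 0) (hu1 : u 0 = 0) (hu4 : u 3 = 0)
    (hs' : 0 ≤ s') (ht' : 0 ≤ t') (hs'' : 0 ≤ s'') (ht'' : 0 ≤ t'')
    (hS : s = s' + s'') (hT : t = t' + t'') (hU : u = u' + u'')
    (hW' : InBCDual s' t' u') (hW'' : InBCDual s'' t'' u'') :
    (s', t', u') = √(s' 0 * t' 0) • (s, t, u) := by
  subst hS hT hU
  obtain ⟨zs'1, zs''1⟩ := (add_eq_zero_iff_of_nonneg (hs' 1) (hs'' 1)).1 hs2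
  obtain ⟨zs'2, zs''2⟩ := (add_eq_zero_iff_of_nonneg (hs' 2) (hs'' 2)).1 hs3
  obtain ⟨zt'1, zt''1⟩ := (add_eq_zero_iff_of_nonneg (ht' 1) (ht'' 1)).1 ht2
  obtain ⟨zt'2, zt''2⟩ := (add_eq_zero_iff_of_nonneg (ht' 2) (ht'' 2)).1 ht3
  obtain ⟨w02', w13', w01', -⟩ := hW'
  obtain ⟨w02'', w13'', w01'', -⟩ := hW''
  obtain ⟨hu'0, hn1, hs'0, ht'0, hu'1⟩ := witness_cauchySchwarz_rigidity (hs' 0) (hs'' 0)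
    (ht' 0) (ht'' 0) h1 hu2 (w01'.norm_add_norm_le zs'1) (w01''.norm_add_norm_le zs''1)
  obtain ⟨-, -, -, -, hu'2⟩ := witness_cauchySchwarz_rigidity (hs' 0) (hs'' 0)
    (ht' 0) (ht'' 0) h1 hu3 (w02'.norm_add_norm_le zs'2) (w02''.norm_add_norm_le zs''2)
  obtain ⟨hu'3, hn1', hs'3, ht'3, -⟩ := witness_cauchySchwarz_rigidity (hs' 3) (hs'' 3)
    (ht' 3) (ht'' 3) h4 hu2 (w13'.symm.norm_add_norm_le zs'1)
    (w13''.symm.norm_add_norm_le zs''1)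
  rw [← hn1', hn1] at hs'3 ht'3
  rw [Pi.add_apply, hu'0, zero_add] at hu1
  rw [Pi.add_apply, hu'3, zero_add] at hu4
  refine Prod.ext (funext fun i => ?_) (Prod.ext (funext fun i => ?_) (funext fun i => ?_)) <;>
    fin_cases i <;>
    simp only [Prod.smul_mk, Pi.smul_apply, smul_eq_mul, Pi.add_apply, Fin.zero_eta, Fin.mk_one,
      Fin.reduceFinMk, zs'1, zs''1, zs'2, zs''2, zt'1, zt''1, zt'2, zt''2, hu'0, hu'3, hu1, hu4,
      add_zero, mul_zero, smul_zero] <;>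
    assumption

theorem extreme_W2e14_in_BCdual_general (s t s' t' s'' t'' : Fin 4 → ℝ) (u u' u'' : Fin 4 → ℂ)
    (h1 : Real.sqrt (s 0 * t 0) = 1) (h4 : Real.sqrt (s 3 * t 3) = 1)
    (hu2 : ‖u 1‖ = 1) (hu3 : ‖u 2‖ = 1)
    (hs2 : s 1 = 0) (hs3 : s 2 = 0) (ht2 : t 1 = 0) (ht3 : t 2 = 0)
    (hu1 : u 0 = 0) (hu4 : u 3 = 0)
    (hs' : ∀ i, 0 ≤ s' i) (ht' : ∀ i, 0 ≤ t' i)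
    (hs'' : ∀ i, 0 ≤ s'' i) (ht'' : ∀ i, 0 ≤ t'' i)
    (hsum : s = s' + s'' ∧ t = t' + t'' ∧ u = u' + u'')
    (hW' : W1 s' t' u' 0 2 ∧ W1 s' t' u' 1 3 ∧ W1 s' t' u' 0 1 ∧ W1 s' t' u' 2 3)
    (hW'' : W1 s'' t'' u'' 0 2 ∧ W1 s'' t'' u'' 1 3 ∧ W1 s'' t'' u'' 0 1 ∧ W1 s'' t'' u'' 2 3) :
    ∃ c : ℝ, 0 ≤ c ∧
      ((s' = c • s'' ∧ t' = c • t'' ∧ u' = (c : ℝ) • u'') ∨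
       (s'' = c • s' ∧ t'' = c • t' ∧ u'' = (c : ℝ) • u')) := by
  obtain ⟨hS, hT, hU⟩ := hsum
  have h' := eq_sqrt_smul_of_W2e14_eq_add h1 h4 hu2 hu3 hs2 hs3 ht2 ht3 hu1 hu4
    hs' ht' hs'' ht'' hS hT hU hW' hW''
  have h'' := eq_sqrt_smul_of_W2e14_eq_add h1 h4 hu2 hu3 hs2 hs3 ht2 ht3 hu1 hu4
    hs'' ht'' hs' ht' (hS.trans (add_comm _ _)) (hT.trans (add_comm _ _))
    (hU.trans (add_comm _ _)) hW'' hW'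
  have hray : SameRay ℝ (s', t', u') (s'', t'', u'') := by
    rw [h', h'']
    exact SameRay.sameRay_nonneg_smul_left _ (sqrt_nonneg _) |>.nonneg_smul_right (sqrt_nonneg _)
  obtain ⟨c, hc, h⟩ := hray.exists_nonneg_smul_eq_or
  simp only [Prod.smul_mk, Prod.mk.injEq] at h
  exact ⟨c, hc, h⟩

theorem extreme_W2e14_in_BCdual (s t s' t' s'' t'' : Fin 4 → ℝ) (u u' u'' : Fin 4 → ℂ)
    (hs : ∀ i, 0 ≤ s i) (ht : ∀ i, 0 ≤ t i)
    (h1 : Real.sqrt (s 0 * t 0) = 1) (h4 : Real.sqrt (s 3 * t 3) = 1)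
    (hu2 : ‖u 1‖ = 1) (hu3 : ‖u 2‖ = 1)
    (hs2 : s 1 = 0) (hs3 : s 2 = 0) (ht2 : t 1 = 0) (ht3 : t 2 = 0)
    (hu1 : u 0 = 0) (hu4 : u 3 = 0)
    (hs' : ∀ i, 0 ≤ s' i) (ht' : ∀ i, 0 ≤ t' i)
    (hs'' : ∀ i, 0 ≤ s'' i) (ht'' : ∀ i, 0 ≤ t'' i)
    (hsum : s = s' + s'' ∧ t = t' + t'' ∧ u = u' + u'')
    (hW' : W1 s' t' u' 0 2 ∧ W1 s' t' u' 1 3 ∧ W1 s' t' u' 0 1 ∧ W1 s' t' u' 2 3)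
    (hW'' : W1 s'' t'' u'' 0 2 ∧ W1 s'' t'' u'' 1 3 ∧ W1 s'' t'' u'' 0 1 ∧ W1 s'' t'' u'' 2 3) :
    ∃ c : ℝ, 0 ≤ c ∧
      ((s' = c • s'' ∧ t' = c • t'' ∧ u' = (c : ℝ) • u'') ∨
       (s'' = c • s' ∧ t'' = c • t' ∧ u'' = (c : ℝ) • u')) :=
  extreme_W2e14_in_BCdual_general s t s' t' s'' t'' u u' u'' h1 h4 hu2 hu3 hs2 hs3 ht2 ht3 hu1 hu4
    hs' ht' hs'' ht'' hsum hW' hW''
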